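/- arXiv:2110.03651 — 15 statements merged into one kernel-verified Lean document; each statement's English description precedes it below -/
import Mathlib

section
/- For every nonzero integer m and every natural number n, the sum over k from 0 to n of k * ((64-m)k^3 + (96+m)k^2 + 48k + 8) * C(2k,k)^3 / m^k equals 8n(2n+1)^3 * C(2n,n)^3 / m^n. -/
theorem stmt1 (m : ℤ) (hm : m ≠ 0) (n : ℕ) :
    ∑ k ∈ Finset.range (n + 1),
      (k : ℚ) * ((64 - (m : ℚ)) * k ^ 3 + (96 + (m : ℚ)) * k ^ 2 + 48 * k + 8) * (Nat.choose (2 * k) k : ℚ) ^ 3 / (m : ℚ) ^ k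
    = 8 * n * (2 * n + 1) ^ 3 * (Nat.choose (2 * n) n : ℚ) ^ 3 / (m : ℚ) ^ n := by
  have hmq : (m : ℚ) ≠ 0 := Int.cast_ne_zero.mpr hm
  induction n with
  | zero => simp
  | succ n ih =>
    rw [Finset.sum_range_succ, ih]
    have key : ((n : ℚ) + 1) * (Nat.choose (2 * (n + 1)) (n + 1) : ℚ)
        = 2 * (2 * n + 1) * (Nat.choose (2 * n) n : ℚ) := by
      have h := Nat.succ_mul_centralBinom_succ n
      have h2 : (n + 1) * Nat.choose (2 * (n + 1)) (n + 1)
          = 2 * (2 * n + 1) * Nat.choose (2 * n) n := by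
        simpa [Nat.centralBinom] using h
      exact_mod_cast h2
    have hn1 : ((n : ℚ) + 1) ≠ 0 := by positivity
    have hC : (Nat.choose (2 * (n + 1)) (n + 1) : ℚ)
        = 2 * (2 * n + 1) * (Nat.choose (2 * n) n : ℚ) / ((n : ℚ) + 1) := by
      field_simp
      linarith [key]
    push_cast
    rw [hC]
    field_simp
    ring
end

section
/- For every nonzero integer m and every natural number n, the sum over k from 0 to n of k^2 * ((64-m)k^3 + (96+2m)k^2 + (48-m)k + 8) * C(2k,k)^3 / m^k equals 8n^2(2n+1)^3 * C(2n,n)^3 / m^n. -/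
theorem stmt2 (m : ℤ) (hm : m ≠ 0) (n : ℕ) :
    ∑ k ∈ Finset.range (n + 1),
      (k : ℚ) ^ 2 * ((64 - (m : ℚ)) * k ^ 3 + (96 + 2 * (m : ℚ)) * k ^ 2 + (48 - (m : ℚ)) * k + 8) * (Nat.choose (2 * k) k : ℚ) ^ 3 / (m : ℚ) ^ k
    = 8 * n ^ 2 * (2 * n + 1) ^ 3 * (Nat.choose (2 * n) n : ℚ) ^ 3 / (m : ℚ) ^ n := by
  have hmq : (m : ℚ) ≠ 0 := by exact_mod_cast hm
  induction n with
  | zero => simp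
  | succ n ih =>
    rw [Finset.sum_range_succ, ih]
    have hn1 : ((n : ℚ) + 1) ≠ 0 := by positivity
    have key : ((n : ℚ) + 1) * (Nat.choose (2 * (n + 1)) (n + 1) : ℚ)
        = 2 * (2 * n + 1) * (Nat.choose (2 * n) n : ℚ) := by
      have h := Nat.succ_mul_centralBinom_succ n
      simp only [Nat.centralBinom] at h
      exact_mod_cast h
    have hC : (Nat.choose (2 * (n + 1)) (n + 1) : ℚ)
        = 2 * (2 * n + 1) * (Nat.choose (2 * n) n : ℚ) / ((n : ℚ) + 1) := by
      field_simp
      linarith [key]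
    rw [hC]
    push_cast
    field_simp
    ring
end

section
/- For every nonzero integer m and every natural number n, the sum over k from 0 to n of ((64-m)k^3 + (96-3m)k^2 + (48-3m)k + 8-m) * C(2k,k)^3 / ((k+1)^3 m^k) equals -m + 8(2n+1)^3 * C(2n,n)^3 / ((n+1)^3 m^n). -/
theorem stmt3 (m : ℤ) (hm : m ≠ 0) (n : ℕ) :
    ∑ k ∈ Finset.range (n + 1),
      ((64 - (m : ℚ)) * k ^ 3 + (96 - 3 * (m : ℚ)) * k ^ 2 + (48 - 3 * (m : ℚ)) * k + 8 - (m : ℚ)) * (Nat.choose (2 * k) k : ℚ) ^ 3 / ((k + 1 : ℚ) ^ 3 * (m : ℚ) ^ k)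
    = -(m : ℚ) + 8 * (2 * n + 1) ^ 3 * (Nat.choose (2 * n) n : ℚ) ^ 3 / ((n + 1 : ℚ) ^ 3 * (m : ℚ) ^ n) := by
  have hm' : (m : ℚ) ≠ 0 := Int.cast_ne_zero.mpr hm
  induction n with
  | zero => norm_num; ring
  | succ n ih =>
    rw [Finset.sum_range_succ, ih]
    have hn1 : ((n : ℚ) + 1) ≠ 0 := by positivity
    have hn2 : ((n : ℚ) + 2) ≠ 0 := by positivity
    have hmp : (m : ℚ) ^ n ≠ 0 := pow_ne_zero _ hm'
    have key : ((2 * (n + 1)).choose (n + 1) : ℚ)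
        = 2 * (2 * n + 1) * ((2 * n).choose n) / (n + 1) := by
      have h := Nat.succ_mul_centralBinom_succ n
      simp only [Nat.centralBinom] at h
      have h' : ((n + 1) * (2 * (n + 1)).choose (n + 1) : ℚ)
          = (2 * (2 * n + 1) * (2 * n).choose n : ℚ) := by exact_mod_cast congrArg (Nat.cast : ℕ → ℚ) h
      field_simp
      push_cast at h' ⊢
      linarith
    push_cast [key]
    field_simp
    ring
end

section
/- For every nonzero integer m and every natural number n, the sum over k from 0 to n of k * P(k,m) * C(2k,k)^3 / ((k+1)^3 m^k) equals 8m - 8(2n+1)^3 (m - 8n + mn) * C(2n,n)^3 / ((n+1)^3 m^n), where P(k,m) = (512 - 72m + m^2)k^3 + (768 - 176m + 3m^2)k^2 + (384 - 144m + 3m^2)k + 64 - 40m + m^2. -/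
theorem stmt4 (m : ℤ) (hm : m ≠ 0) (n : ℕ) :
    ∑ k ∈ Finset.range (n + 1),
      (k : ℚ) * ((512 - 72 * (m : ℚ) + (m : ℚ) ^ 2) * k ^ 3 + (768 - 176 * (m : ℚ) + 3 * (m : ℚ) ^ 2) * k ^ 2 + (384 - 144 * (m : ℚ) + 3 * (m : ℚ) ^ 2) * k + 64 - 40 * (m : ℚ) + (m : ℚ) ^ 2) * (Nat.choose (2 * k) k : ℚ) ^ 3 / ((k + 1 : ℚ) ^ 3 * (m : ℚ) ^ k)
    = 8 * (m : ℚ) - 8 * (2 * n + 1) ^ 3 * ((m : ℚ) - 8 * n + (m : ℚ) * n) * (Nat.choose (2 * n) n : ℚ) ^ 3 / ((n + 1 : ℚ) ^ 3 * (m : ℚ) ^ n) := by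
  have hmQ : (m : ℚ) ≠ 0 := by exact_mod_cast hm
  induction n with
  | zero => simp
  | succ n ih =>
      rw [Finset.sum_range_succ, ih]
      have hC : ((Nat.choose (2 * (n + 1)) (n + 1) : ℚ)) * (n + 1)
          = (Nat.choose (2 * n) n : ℚ) * (2 * (2 * n + 1)) := by
        have key : (2 * (n + 1)).choose (n + 1) * (n + 1) * (n + 1)
            = (2 * n).choose n * (2 * (2 * n + 1)) * (n + 1) := by
          have e1 : (2 * (n + 1)).choose (n + 1) * (n + 1) = (2 * n + 1 + 1) * (2 * n + 1).choose n := by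
            have := Nat.add_one_mul_choose_eq (2 * n + 1) n
            have h2 : 2 * (n + 1) = (2 * n + 1) + 1 := by ring
            rw [h2]; exact this.symm
          have e2 : (2 * n + 1).choose n = (2 * n + 1).choose (n + 1) := by
            have := Nat.choose_symm (show n + 1 ≤ 2 * n + 1 by omega)
            have h : 2 * n + 1 - (n + 1) = n := by omega
            rw [h] at this; omega
          have e3 : (2 * n + 1).choose (n + 1) * (n + 1) = (2 * n + 1) * (2 * n).choose n := by
            have := Nat.add_one_mul_choose_eq (2 * n) n
            exact this.symm
          calc (2 * (n + 1)).choose (n + 1) * (n + 1) * (n + 1)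
              = (2 * n + 1 + 1) * ((2 * n + 1).choose (n + 1) * (n + 1)) := by rw [e1, e2]; ring
            _ = (2 * n + 1 + 1) * ((2 * n + 1) * (2 * n).choose n) := by rw [e3]
            _ = (2 * n).choose n * (2 * (2 * n + 1)) * (n + 1) := by ring
        have key' : (2 * (n + 1)).choose (n + 1) * (n + 1) = (2 * n).choose n * (2 * (2 * n + 1)) :=
          Nat.eq_of_mul_eq_mul_right (by omega) key
        exact_mod_cast key'
      have hn1 : ((n : ℚ) + 1) ≠ 0 := by positivity
      have hn2 : ((n : ℚ) + 1 + 1) ≠ 0 := by positivity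
      have hmp : (m : ℚ) ^ n ≠ 0 := pow_ne_zero _ hmQ
      push_cast [pow_succ]
      have hC' : ((Nat.choose (2 * (n + 1)) (n + 1) : ℚ)) = (Nat.choose (2 * n) n : ℚ) * (2 * (2 * n + 1)) / (n + 1) := by
        field_simp
        linear_combination hC
      push_cast at hC'
      rw [hC']
      field_simp
      ring
end

section
/- For every integer m and every positive integer n, the sum over k from 1 to n of m^k * ((m-64)k^3 + (m+96)k^2 - 48k + 8) / (k^2 * C(2k,k)^3) equals -m + (n+1) m^(n+1) / C(2n,n)^3. -/
theorem stmt6 (m : ℤ) (n : ℕ) (hn : 0 < n) :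
    ∑ k ∈ Finset.Icc 1 n,
      (m : ℚ) ^ k * (((m : ℚ) - 64) * k ^ 3 + ((m : ℚ) + 96) * k ^ 2 - 48 * k + 8) / ((k : ℚ) ^ 2 * (Nat.choose (2 * k) k : ℚ) ^ 3)
    = -(m : ℚ) + (n + 1 : ℚ) * (m : ℚ) ^ (n + 1) / (Nat.choose (2 * n) n : ℚ) ^ 3 := by
  induction n with
  | zero => exact absurd hn (lt_irrefl 0)
  | succ n ih =>
    rcases Nat.eq_zero_or_pos n with h0 | hpos
    · subst h0
      norm_num
      ring
    · rw [Finset.sum_Icc_succ_top (by omega : 1 ≤ n + 1), ih hpos]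
      have hc : ((n + 1) : ℚ) * (Nat.choose (2 * (n + 1)) (n + 1) : ℚ)
          = 2 * (2 * n + 1) * (Nat.choose (2 * n) n : ℚ) := by
        have := Nat.succ_mul_centralBinom_succ n
        rw [Nat.centralBinom, Nat.centralBinom] at this
        exact_mod_cast congrArg (Nat.cast : ℕ → ℚ) this
      have hcn : (Nat.choose (2 * n) n : ℚ) ≠ 0 := by
        exact_mod_cast Nat.pos_iff_ne_zero.mp (Nat.choose_pos (by omega))
      have hcn1 : (Nat.choose (2 * (n + 1)) (n + 1) : ℚ) ≠ 0 := by
        exact_mod_cast Nat.pos_iff_ne_zero.mp (Nat.choose_pos (by omega))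
      have hn1 : ((n : ℚ) + 1) ≠ 0 := by positivity
      have hrepl : (Nat.choose (2 * (n + 1)) (n + 1) : ℚ)
          = 2 * (2 * n + 1) * (Nat.choose (2 * n) n : ℚ) / ((n : ℚ) + 1) := by
        field_simp
        linarith [hc]
      push_cast
      rw [hrepl]
      field_simp
      ring
end

section
/- For every integer m and every positive integer n, the sum over k from 1 to n of m^k * ((m-64)k^3 + 96k^2 - 48k + 8) / (k^3 * C(2k,k)^3) equals -m + m^(n+1) / C(2n,n)^3. -/
theorem stmt7 (m : ℤ) (n : ℕ) (hn : 0 < n) :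
    ∑ k ∈ Finset.Icc 1 n,
      (m : ℚ) ^ k * (((m : ℚ) - 64) * k ^ 3 + 96 * k ^ 2 - 48 * k + 8) / ((k : ℚ) ^ 3 * (Nat.choose (2 * k) k : ℚ) ^ 3)
    = -(m : ℚ) + (m : ℚ) ^ (n + 1) / (Nat.choose (2 * n) n : ℚ) ^ 3 := by
  induction n with
  | zero => omega
  | succ n ih =>
    rcases Nat.eq_zero_or_pos n with h0 | hpos
    · subst h0
      rw [Finset.Icc_self, Finset.sum_singleton]
      norm_num
      ring
    · rw [Finset.sum_Icc_succ_top (by omega), ih hpos]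
      have key := Nat.succ_mul_centralBinom_succ n
      simp only [Nat.centralBinom] at key
      have hb : (Nat.choose (2 * (n+1)) (n+1) : ℚ) ≠ 0 := by
        exact_mod_cast Nat.choose_pos (by omega) |>.ne'
      have ha : (Nat.choose (2 * n) n : ℚ) ≠ 0 := by
        exact_mod_cast Nat.choose_pos (by omega) |>.ne'
      have hkey : ((n:ℚ) + 1) * (Nat.choose (2 * (n+1)) (n+1) : ℚ)
          = 2 * (2 * n + 1) * (Nat.choose (2 * n) n : ℚ) := by
        exact_mod_cast congrArg (Nat.cast : ℕ → ℚ) key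
      have hn1 : ((n:ℚ) + 1) ≠ 0 := by positivity
      push_cast
      have hkey3 : (((n:ℚ)+1) * (Nat.choose (2 * (n+1)) (n+1) : ℚ))^3
          = (2 * (2 * (n:ℚ) + 1) * (Nat.choose (2 * n) n : ℚ))^3 := by rw [hkey]
      field_simp
      linear_combination ((m:ℚ))^(n+1) * hkey3
end

section
/- For every positive integer n, the sum over k from 1 to n of (63k^3 - 96k^2 + 48k - 8) / (k^3 * C(2k,k)^3) equals 1 - 1 / C(2n,n)^3. -/
theorem stmt9 (n : ℕ) (hn : 0 < n) :
    ∑ k ∈ Finset.Icc 1 n,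
      (63 * (k : ℚ) ^ 3 - 96 * k ^ 2 + 48 * k - 8) / ((k : ℚ) ^ 3 * (Nat.choose (2 * k) k : ℚ) ^ 3)
    = 1 - 1 / (Nat.choose (2 * n) n : ℚ) ^ 3 := by
  induction n, hn using Nat.le_induction with
  | base => norm_num
  | succ n hn ih =>
    rw [Finset.sum_Icc_succ_top (by omega : 1 ≤ n + 1), ih]
    have key : ((n : ℚ) + 1) * (Nat.choose (2 * (n + 1)) (n + 1) : ℚ)
        = 2 * (2 * n + 1) * (Nat.choose (2 * n) n : ℚ) := by
      have := Nat.succ_mul_centralBinom_succ n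
      simp only [Nat.centralBinom] at this
      have : ((n + 1) * Nat.centralBinom (n + 1) : ℚ)
          = (2 * (2 * n + 1) * Nat.centralBinom n : ℚ) := by exact_mod_cast congrArg Nat.cast this
      simp only [Nat.centralBinom] at this
      push_cast at this ⊢
      linarith
    have h1 : (Nat.choose (2 * n) n : ℚ) ≠ 0 := by
      exact_mod_cast Nat.choose_pos (by omega) |>.ne'
    have h2 : (Nat.choose (2 * (n + 1)) (n + 1) : ℚ) ≠ 0 := by
      exact_mod_cast Nat.choose_pos (by omega) |>.ne'
    have h3 : ((n : ℚ) + 1) ≠ 0 := by positivity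
    have hc : (Nat.choose (2 * n) n : ℚ)
        = ((n : ℚ) + 1) * (Nat.choose (2 * (n + 1)) (n + 1) : ℚ) / (2 * (2 * n + 1)) := by
      field_simp
      linarith [key]
    push_cast
    rw [hc]
    have h4 : (2 * (n : ℚ) + 1) ≠ 0 := by positivity
    field_simp
    ring
end

section
/- For every integer m and every positive integer n, the sum over k from 1 to n of (k+1) m^k * P1(k,m) / (k^3 * C(2k,k)^3) equals m(m-432) + (216(n+2) - m(n+1)) m^(n+1) / C(2n,n)^3, where P1(k,m) = (280m - m^2 - 13824)k^3 + (56m + 20736)k^2 - (8m + 10368)k + 1728. -/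
theorem stmt10 (m : ℤ) (n : ℕ) (hn : 0 < n) :
    ∑ k ∈ Finset.Icc 1 n,
      (k + 1 : ℚ) * (m : ℚ) ^ k * ((280 * (m : ℚ) - (m : ℚ) ^ 2 - 13824) * k ^ 3 + (56 * (m : ℚ) + 20736) * k ^ 2 - (8 * (m : ℚ) + 10368) * k + 1728) / ((k : ℚ) ^ 3 * (Nat.choose (2 * k) k : ℚ) ^ 3)
    = (m : ℚ) * ((m : ℚ) - 432) + (216 * (n + 2 : ℚ) - (m : ℚ) * (n + 1)) * (m : ℚ) ^ (n + 1) / (Nat.choose (2 * n) n : ℚ) ^ 3 := by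
  induction n, hn using Nat.le_induction with
  | base =>
    norm_num [Finset.Icc_self]
    ring
  | succ n hn ih =>
    rw [Finset.sum_Icc_succ_top (by omega : 1 ≤ n + 1), ih]
    have key : ((n : ℚ) + 1) * ((Nat.choose (2 * (n + 1)) (n + 1) : ℕ) : ℚ)
        = 2 * (2 * (n : ℚ) + 1) * ((Nat.choose (2 * n) n : ℕ) : ℚ) := by
      have h := Nat.succ_mul_centralBinom_succ n
      simp only [Nat.centralBinom] at h
      have h2 := congrArg (fun x : ℕ => (x : ℚ)) h
      push_cast at h2 ⊢
      linarith
    have ha : ((Nat.choose (2 * n) n : ℕ) : ℚ) ≠ 0 := by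
      have := Nat.choose_pos (show n ≤ 2 * n by omega)
      exact_mod_cast this.ne'
    have hn1 : ((n : ℚ) + 1) ≠ 0 := by positivity
    have hbval : ((Nat.choose (2 * (n + 1)) (n + 1) : ℕ) : ℚ)
        = 2 * (2 * (n : ℚ) + 1) * ((Nat.choose (2 * n) n : ℕ) : ℚ) / ((n : ℚ) + 1) := by
      field_simp
      linarith [key]
    push_cast
    rw [hbval]
    have h21 : (2 * (n : ℚ) + 1) ≠ 0 := by positivity
    field_simp
    ring
end

section
/- For every integer m and every positive integer n, the sum over k from 1 to n of m^k * ((m-108)k^3 + (2m+162)k^2 + (m-78)k + 12) / (k * C(2k,k)^2 * C(3k,k)) equals -m + (n+1)^2 m^(n+1) / (C(2n,n)^2 * C(3n,n)). -/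
lemma chooseA (k : ℕ) :
    Nat.choose (2 * (k + 1)) (k + 1) * ((k + 1) * (k + 1)) =
      Nat.choose (2 * k) k * ((2 * k + 1) * (2 * k + 2)) := by
  have h1 := Nat.add_one_mul_choose_eq (2 * k + 1) k
  have h2 := Nat.add_one_mul_choose_eq (2 * k) k
  have hsym : Nat.choose (2 * k + 1) (k + 1) = Nat.choose (2 * k + 1) k := by
    have := Nat.choose_symm (n := 2 * k + 1) (k := k + 1) (by omega)
    simpa [show 2 * k + 1 - (k + 1) = k by omega] using this.symm
  have : 2 * (k + 1) = 2 * k + 1 + 1 := by ring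
  rw [this]
  nlinarith [h1, h2, hsym]

lemma chooseB (k : ℕ) :
    Nat.choose (3 * (k + 1)) (k + 1) * ((k + 1) * ((2 * k + 1) * (2 * k + 2))) =
      Nat.choose (3 * k) k * ((3 * k + 1) * ((3 * k + 2) * (3 * k + 3))) := by
  have h1 := Nat.add_one_mul_choose_eq (3 * k + 2) k
  -- (3k+3) * C(3k+2, k) = C(3k+3, k+1) * (k+1)
  have h2 := Nat.choose_mul_succ_eq (3 * k + 1) k
  -- C(3k+1,k) * (3k+2) = C(3k+2,k) * (3k+2-k)
  have h3 := Nat.choose_mul_succ_eq (3 * k) k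
  have e2 : 3 * k + 1 + 1 - k = 2 * k + 2 := by omega
  have e3 : 3 * k + 1 - k = 2 * k + 1 := by omega
  rw [e2] at h2
  rw [e3] at h3
  have : 3 * (k + 1) = 3 * k + 2 + 1 := by ring
  rw [this]
  rw [show 3 * k + 1 + 1 = 3 * k + 2 from by omega] at h2
  zify at h1 h2 h3 ⊢
  linear_combination (-((2 * (k:ℤ) + 1) * (2 * k + 2))) * h1 - (3 * k + 3) * (2 * k + 1) * h2 - (3 * k + 3) * (3 * k + 2) * h3

theorem stmt11 (m : ℤ) (n : ℕ) (hn : 0 < n) :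
    ∑ k ∈ Finset.Icc 1 n,
      (m : ℚ) ^ k * (((m : ℚ) - 108) * k ^ 3 + (2 * (m : ℚ) + 162) * k ^ 2 + ((m : ℚ) - 78) * k + 12) / ((k : ℚ) * (Nat.choose (2 * k) k : ℚ) ^ 2 * (Nat.choose (3 * k) k : ℚ))
    = -(m : ℚ) + (n + 1 : ℚ) ^ 2 * (m : ℚ) ^ (n + 1) / ((Nat.choose (2 * n) n : ℚ) ^ 2 * (Nat.choose (3 * n) n : ℚ)) := by
  induction n, hn using Nat.le_induction with
  | base =>
    simp [Finset.Icc_self]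
    norm_num
    ring
  | succ n hn ih =>
    rw [Finset.sum_Icc_succ_top (by omega), ih]
    have hA : ((Nat.choose (2 * (n + 1)) (n + 1) : ℚ)) * ((n + 1) * (n + 1)) =
        (Nat.choose (2 * n) n : ℚ) * ((2 * n + 1) * (2 * n + 2)) := by
      exact_mod_cast congrArg (Nat.cast : ℕ → ℚ) (chooseA n)
    have hB : ((Nat.choose (3 * (n + 1)) (n + 1) : ℚ)) * ((n + 1) * ((2 * n + 1) * (2 * n + 2))) =
        (Nat.choose (3 * n) n : ℚ) * ((3 * n + 1) * ((3 * n + 2) * (3 * n + 3))) := by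
      exact_mod_cast congrArg (Nat.cast : ℕ → ℚ) (chooseB n)
    have h2n : (Nat.choose (2 * n) n : ℚ) ≠ 0 := by
      exact_mod_cast (Nat.choose_pos (by omega)).ne'
    have h3n : (Nat.choose (3 * n) n : ℚ) ≠ 0 := by
      exact_mod_cast (Nat.choose_pos (by omega)).ne'
    have h2n1 : (Nat.choose (2 * (n + 1)) (n + 1) : ℚ) ≠ 0 := by
      exact_mod_cast (Nat.choose_pos (by omega)).ne'
    have h3n1 : (Nat.choose (3 * (n + 1)) (n + 1) : ℚ) ≠ 0 := by
      exact_mod_cast (Nat.choose_pos (by omega)).ne'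
    have hn1 : ((n : ℚ) + 1) ≠ 0 := by positivity
    have eA : (Nat.choose (2 * (n + 1)) (n + 1) : ℚ) =
        (Nat.choose (2 * n) n : ℚ) * ((2 * n + 1) * (2 * n + 2)) / ((n + 1) * (n + 1)) := by
      rw [eq_div_iff (by positivity)]
      linarith [hA]
    have eB : (Nat.choose (3 * (n + 1)) (n + 1) : ℚ) =
        (Nat.choose (3 * n) n : ℚ) * ((3 * n + 1) * ((3 * n + 2) * (3 * n + 3))) / ((n + 1) * ((2 * n + 1) * (2 * n + 2))) := by
      rw [eq_div_iff (by positivity)]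
      linarith [hB]
    push_cast
    push_cast at eA eB
    rw [eA, eB]
    have h21 : (2 * (n:ℚ) + 1) ≠ 0 := by positivity
    have h22 : (2 * (n:ℚ) + 2) ≠ 0 := by positivity
    field_simp
    ring
end

section
/- For every integer m and every positive integer n, the sum over k from 1 to n of m^k * ((m-108)k^3 + 162k^2 - 78k + 12) / (k^3 * C(2k,k)^2 * C(3k,k)) equals -m + m^(n+1) / (C(2n,n)^2 * C(3n,n)). -/
lemma ratio (k : ℕ) :
    ((2*(k+1)).choose (k+1) : ℚ)^2 * ((3*(k+1)).choose (k+1)) * ((k:ℚ)+1)^3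
    = ((2*k).choose k : ℚ)^2 * ((3*k).choose k) *
        (6*(2*(k:ℚ)+1)*(3*(k:ℚ)+1)*(3*(k:ℚ)+2)) := by
  have h1 : (k+1) ≤ 2*(k+1) := by omega
  have h2 : (k+1) ≤ 3*(k+1) := by omega
  have h3 : k ≤ 2*k := by omega
  have h4 : k ≤ 3*k := by omega
  rw [Nat.cast_choose ℚ h1, Nat.cast_choose ℚ h2, Nat.cast_choose ℚ h3, Nat.cast_choose ℚ h4]
  have e1 : 2*(k+1) - (k+1) = k+1 := by omega
  have e2 : 3*(k+1) - (k+1) = 2*k+2 := by omega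
  have e3 : 2*k - k = k := by omega
  have e4 : 3*k - k = 2*k := by omega
  rw [e1, e2, e3, e4]
  have f1 : ((2*(k+1)).factorial : ℚ) = (2*(k:ℚ)+2)*(2*(k:ℚ)+1)*((2*k).factorial) := by
    have : 2*(k+1) = (2*k+1)+1 := by omega
    rw [this, Nat.factorial_succ, Nat.factorial_succ]
    push_cast; ring
  have f2 : ((3*(k+1)).factorial : ℚ) = (3*(k:ℚ)+3)*(3*(k:ℚ)+2)*(3*(k:ℚ)+1)*((3*k).factorial) := by
    have : 3*(k+1) = ((3*k+2)+1) := by omega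
    rw [this, Nat.factorial_succ, Nat.factorial_succ, Nat.factorial_succ]
    push_cast; ring
  have f3 : ((k+1).factorial : ℚ) = ((k:ℚ)+1)*(k.factorial) := by
    rw [Nat.factorial_succ]; push_cast; ring
  have f4 : ((2*k+2).factorial : ℚ) = (2*(k:ℚ)+2)*(2*(k:ℚ)+1)*((2*k).factorial) := by
    rw [show 2*k+2 = (2*k+1)+1 by omega, Nat.factorial_succ, Nat.factorial_succ]
    push_cast; ring
  rw [f1, f2, f3, f4]
  have n1 : ((2*k).factorial : ℚ) ≠ 0 := by positivity
  have n2 : ((3*k).factorial : ℚ) ≠ 0 := by exact_mod_cast Nat.factorial_ne_zero _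
  have n3 : (k.factorial : ℚ) ≠ 0 := by exact_mod_cast Nat.factorial_ne_zero _
  have n4 : ((k:ℚ)+1) ≠ 0 := by positivity
  field_simp
  ring

theorem stmt12 (m : ℤ) (n : ℕ) (hn : 0 < n) :
    ∑ k ∈ Finset.Icc 1 n,
      (m : ℚ) ^ k * (((m : ℚ) - 108) * k ^ 3 + 162 * k ^ 2 - 78 * k + 12) / ((k : ℚ) ^ 3 * (Nat.choose (2 * k) k : ℚ) ^ 2 * (Nat.choose (3 * k) k : ℚ))
    = -(m : ℚ) + (m : ℚ) ^ (n + 1) / ((Nat.choose (2 * n) n : ℚ) ^ 2 * (Nat.choose (3 * n) n : ℚ)) := by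
  induction n, hn using Nat.le_induction with
  | base => norm_num; ring
  | succ n hn ih =>
    rw [Finset.sum_Icc_succ_top (by omega : 1 ≤ n+1), ih]
    have c1 : (0:ℚ) < ((2*n).choose n : ℚ) := by
      exact_mod_cast Nat.choose_pos (by omega)
    have c2 : (0:ℚ) < ((3*n).choose n : ℚ) := by
      exact_mod_cast Nat.choose_pos (by omega)
    have c3 : (0:ℚ) < ((2*(n+1)).choose (n+1) : ℚ) := by
      exact_mod_cast Nat.choose_pos (by omega)
    have c4 : (0:ℚ) < ((3*(n+1)).choose (n+1) : ℚ) := by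
      exact_mod_cast Nat.choose_pos (by omega)
    have hr := ratio n
    have hk : ((n:ℚ)+1) ≠ 0 := by positivity
    have step : (m : ℚ) ^ (n+1) * (((m : ℚ) - 108) * ((n:ℚ)+1) ^ 3 + 162 * ((n:ℚ)+1) ^ 2 - 78 * ((n:ℚ)+1) + 12) / (((n:ℚ)+1) ^ 3 * ((2*(n+1)).choose (n+1) : ℚ) ^ 2 * ((3*(n+1)).choose (n+1) : ℚ))
        = (m:ℚ)^(n+2) / (((2*(n+1)).choose (n+1) : ℚ)^2 * ((3*(n+1)).choose (n+1) : ℚ))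
          - (m:ℚ)^(n+1) / (((2*n).choose n : ℚ)^2 * ((3*n).choose n : ℚ)) := by
      rw [div_sub_div _ _ (by positivity) (by positivity), div_eq_div_iff (by positivity) (by positivity)]
      linear_combination ((m:ℚ)^(n+1) * (((2*(n+1)).choose (n+1) : ℚ)^2 * ((3*(n+1)).choose (n+1) : ℚ))) * hr
    push_cast
    push_cast at step
    rw [step]
    ring
end

section
/- For every nonzero integer m and every natural number n, the sum over k from 0 to n of ((108-m)k^3 + 162k^2 + 78k + 12) * C(2k,k)^2 * C(3k,k) / m^k equals 6(2n+1)(3n+1)(3n+2) * C(2n,n)^2 * C(3n,n) / m^n. -/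
open Nat

lemma chooseA_s13 (n : ℕ) : ((2*(n+1)).choose (n+1) : ℚ) * ((n:ℚ)+1)^2
    = 2*(2*(n:ℚ)+1)*((n:ℚ)+1) * ((2*n).choose n) := by
  have c1 : ((2*n).choose n : ℚ) = (2*n)! / ((n !:ℚ) * n !) := by
    rw [Nat.cast_choose ℚ (show n ≤ 2*n by omega)]
    norm_num [show 2*n - n = n by omega]
  have c2 : (((2*(n+1)).choose (n+1)) : ℚ) = (2*(n+1))! / (((n+1)!:ℚ) * (n+1)!) := by
    rw [Nat.cast_choose ℚ (show n+1 ≤ 2*(n+1) by omega)]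
    norm_num [show 2*(n+1) - (n+1) = n+1 by omega]
  have f1 : ((2*(n+1))! : ℚ) = (2*(n:ℚ)+2) * (2*(n:ℚ)+1) * (2*n)! := by
    rw [show 2*(n+1) = (2*n+1)+1 by omega, Nat.factorial_succ, Nat.factorial_succ]
    push_cast; ring
  have f2 : ((n+1)! : ℚ) = ((n:ℚ)+1) * n ! := by
    rw [Nat.factorial_succ]; push_cast; ring
  have hn : ((n:ℚ)+1) ≠ 0 := by positivity
  have hf : ((n ! : ℚ)) ≠ 0 := by positivity
  have hf2 : (((2*n) ! : ℚ)) ≠ 0 := by positivity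
  rw [c1, c2, f1, f2]
  field_simp

lemma chooseB_s13 (n : ℕ) : ((3*(n+1)).choose (n+1) : ℚ) * (2*((n:ℚ)+1)*(2*(n:ℚ)+1)) * ((n:ℚ)+1)
    = 3*(3*(n:ℚ)+1)*(3*(n:ℚ)+2)*((n:ℚ)+1) * ((3*n).choose n) := by
  have c1 : ((3*n).choose n : ℚ) = (3*n)! / ((n !:ℚ) * (2*n)!) := by
    rw [Nat.cast_choose ℚ (show n ≤ 3*n by omega)]
    norm_num [show 3*n - n = 2*n by omega]
  have c2 : (((3*(n+1)).choose (n+1)) : ℚ) = (3*(n+1))! / (((n+1)!:ℚ) * (2*(n+1))!) := by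
    rw [Nat.cast_choose ℚ (show n+1 ≤ 3*(n+1) by omega)]
    norm_num [show 3*(n+1) - (n+1) = 2*(n+1) by omega]
  have f1 : ((3*(n+1))! : ℚ) = (3*(n:ℚ)+3) * (3*(n:ℚ)+2) * (3*(n:ℚ)+1) * (3*n)! := by
    rw [show 3*(n+1) = ((3*n+1)+1)+1 by omega, Nat.factorial_succ, Nat.factorial_succ, Nat.factorial_succ]
    push_cast; ring
  have f2 : ((n+1)! : ℚ) = ((n:ℚ)+1) * n ! := by
    rw [Nat.factorial_succ]; push_cast; ring
  have f3 : ((2*(n+1))! : ℚ) = (2*(n:ℚ)+2) * (2*(n:ℚ)+1) * (2*n)! := by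
    rw [show 2*(n+1) = (2*n+1)+1 by omega, Nat.factorial_succ, Nat.factorial_succ]
    push_cast; ring
  have hn : ((n:ℚ)+1) ≠ 0 := by positivity
  have hf : ((n ! : ℚ)) ≠ 0 := by positivity
  have hf2 : (((2*n) ! : ℚ)) ≠ 0 := by positivity
  have hf3 : (((3*n) ! : ℚ)) ≠ 0 := by positivity
  rw [c1, c2, f1, f2, f3]
  field_simp

theorem stmt13 (m : ℤ) (hm : m ≠ 0) (n : ℕ) :
    ∑ k ∈ Finset.range (n + 1),
      ((108 - (m : ℚ)) * k ^ 3 + 162 * k ^ 2 + 78 * k + 12) * (Nat.choose (2 * k) k : ℚ) ^ 2 * (Nat.choose (3 * k) k : ℚ) / (m : ℚ) ^ k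
    = 6 * (2 * n + 1) * (3 * n + 1) * (3 * n + 2) * (Nat.choose (2 * n) n : ℚ) ^ 2 * (Nat.choose (3 * n) n : ℚ) / (m : ℚ) ^ n := by
  have hmq : (m:ℚ) ≠ 0 := Int.cast_ne_zero.mpr hm
  induction n with
  | zero => norm_num
  | succ n ih =>
    have hn : ((n:ℚ)+1) ≠ 0 := by positivity
    have h2 : (2*(n:ℚ)+1) ≠ 0 := by positivity
    have hA : ((2*(n+1)).choose (n+1) : ℚ) = 2*(2*(n:ℚ)+1) * ((2*n).choose n) / ((n:ℚ)+1) := by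
      rw [eq_div_iff hn]
      apply mul_right_cancel₀ hn
      linear_combination chooseA_s13 n
    have hB : ((3*(n+1)).choose (n+1) : ℚ)
        = 3*(3*(n:ℚ)+1)*(3*(n:ℚ)+2) * ((3*n).choose n) / (2*((n:ℚ)+1)*(2*(n:ℚ)+1)) := by
      rw [eq_div_iff (by positivity : (2*((n:ℚ)+1)*(2*(n:ℚ)+1)) ≠ 0)]
      apply mul_right_cancel₀ hn
      linear_combination chooseB_s13 n
    rw [Finset.sum_range_succ, ih, hA, hB]
    have hpow : ((m:ℚ))^(n+1) = (m:ℚ)^n * m := pow_succ _ _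
    have hpn : ((m:ℚ))^n ≠ 0 := pow_ne_zero _ hmq
    push_cast
    rw [hpow]
    field_simp
    ring
end

section
/- For every nonzero integer m and every natural number n, the sum over k from 0 to n of ((256-m)k^3 + 384k^2 + 176k + 24) * C(2k,k)^2 * C(4k,2k) / m^k equals 8(2n+1)(4n+1)(4n+3) * C(2n,n)^2 * C(4n,2n) / m^n. -/
theorem stmt14 (m : ℤ) (hm : m ≠ 0) (n : ℕ) :
    ∑ k ∈ Finset.range (n + 1),
      ((256 - (m : ℚ)) * k ^ 3 + 384 * k ^ 2 + 176 * k + 24) * (Nat.choose (2 * k) k : ℚ) ^ 2 * (Nat.choose (4 * k) (2 * k) : ℚ) / (m : ℚ) ^ k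
    = 8 * (2 * n + 1) * (4 * n + 1) * (4 * n + 3) * (Nat.choose (2 * n) n : ℚ) ^ 2 * (Nat.choose (4 * n) (2 * n) : ℚ) / (m : ℚ) ^ n := by
  have hmq : (m : ℚ) ≠ 0 := Int.cast_ne_zero.mpr hm
  induction n with
  | zero => norm_num
  | succ n ih =>
    rw [Finset.sum_range_succ, ih]
    have h1 := Nat.succ_mul_centralBinom_succ n
    have h2 := Nat.succ_mul_centralBinom_succ (2 * n)
    have h3 := Nat.succ_mul_centralBinom_succ (2 * n + 1)
    simp only [Nat.centralBinom] at h1 h2 h3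
    have e1 : 2 * (n + 1) = 2 * n + 1 + 1 := by ring
    have e2 : 4 * (n + 1) = 2 * (2 * n + 1 + 1) := by ring
    have hC : (Nat.choose (2 * (n + 1)) (n + 1) : ℚ)
        = 2 * (2 * n + 1) * (Nat.choose (2 * n) n : ℚ) / (n + 1) := by
      rw [eq_div_iff (by positivity)]
      have h1' := congrArg (Nat.cast (R := ℚ)) h1
      push_cast at h1' ⊢
      linear_combination h1'
    have hD : (Nat.choose (4 * (n + 1)) (2 * (n + 1)) : ℚ)
        = 4 * (4 * n + 1) * (4 * n + 3) * (Nat.choose (4 * n) (2 * n) : ℚ)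
          / ((2 * n + 1) * (2 * n + 2)) := by
      rw [eq_div_iff (by positivity)]
      have h4n : 4 * n = 2 * (2 * n) := by ring
      rw [h4n]
      rw [← e2, ← e1] at h3
      have h3' := congrArg (Nat.cast (R := ℚ)) h3
      have h2' := congrArg (Nat.cast (R := ℚ)) h2
      push_cast at h3' h2' ⊢
      linear_combination (2 * (n:ℚ) + 1) * h3' + 2 * (4 * (n:ℚ) + 3) * h2'
    rw [hC, hD]
    have hp : ((m : ℚ)) ^ (n + 1) = (m : ℚ) ^ n * m := by ring
    rw [hp]
    field_simp
    push_cast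
    ring
end

section
/- For every integer m and every positive integer n, the sum over k from 1 to n of m^k * ((m-256)k^3 + 384k^2 - 176k + 24) / (k^3 * C(2k,k)^2 * C(4k,2k)) equals -m + m^(n+1) / (C(2n,n)^2 * C(4n,2n)). -/
theorem stmt15 (m : ℤ) (n : ℕ) (hn : 0 < n) :
    ∑ k ∈ Finset.Icc 1 n,
      (m : ℚ) ^ k * (((m : ℚ) - 256) * k ^ 3 + 384 * k ^ 2 - 176 * k + 24) / ((k : ℚ) ^ 3 * (Nat.choose (2 * k) k : ℚ) ^ 2 * (Nat.choose (4 * k) (2 * k) : ℚ))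
    = -(m : ℚ) + (m : ℚ) ^ (n + 1) / ((Nat.choose (2 * n) n : ℚ) ^ 2 * (Nat.choose (4 * n) (2 * n) : ℚ)) := by
  induction n with
  | zero => exact absurd hn (by simp)
  | succ n ih =>
    rcases Nat.eq_zero_or_pos n with h0 | hpos
    · subst h0
      simp only [Finset.Icc_self, Finset.sum_singleton]
      norm_num [Nat.choose]
      ring
    · rw [Finset.sum_Icc_succ_top (by omega : 1 ≤ n + 1), ih hpos]
      have e1 : Nat.choose (2 * n) n = Nat.centralBinom n := rfl
      have e2 : Nat.choose (4 * n) (2 * n) = Nat.centralBinom (2 * n) := by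
        rw [Nat.centralBinom]; ring_nf
      have e3 : Nat.choose (2 * (n + 1)) (n + 1) = Nat.centralBinom (n + 1) := rfl
      have e4 : Nat.choose (4 * (n + 1)) (2 * (n + 1)) = Nat.centralBinom (2 * n + 2) := by
        rw [Nat.centralBinom]; ring_nf
      rw [e1, e2, e3, e4]
      have h1 : ((n : ℚ) + 1) * (Nat.centralBinom (n + 1) : ℚ)
          = 2 * (2 * n + 1) * Nat.centralBinom n := by
        exact_mod_cast congrArg (Nat.cast : ℕ → ℚ) (Nat.succ_mul_centralBinom_succ n)
      have h2 : ((2 * n : ℚ) + 1) * (Nat.centralBinom (2 * n + 1) : ℚ)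
          = 2 * (2 * (2 * n) + 1) * Nat.centralBinom (2 * n) := by
        exact_mod_cast congrArg (Nat.cast : ℕ → ℚ) (Nat.succ_mul_centralBinom_succ (2 * n))
      have h3 : ((2 * n + 1 : ℚ) + 1) * (Nat.centralBinom (2 * n + 2) : ℚ)
          = 2 * (2 * (2 * n + 1) + 1) * Nat.centralBinom (2 * n + 1) := by
        exact_mod_cast congrArg (Nat.cast : ℕ → ℚ) (Nat.succ_mul_centralBinom_succ (2 * n + 1))
      have p1 : (Nat.centralBinom n : ℚ) ≠ 0 := by
        exact_mod_cast (Nat.centralBinom_pos n).ne'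
      have p2 : (Nat.centralBinom (2 * n) : ℚ) ≠ 0 := by
        exact_mod_cast (Nat.centralBinom_pos (2 * n)).ne'
      have p3 : (Nat.centralBinom (n + 1) : ℚ) ≠ 0 := by
        exact_mod_cast (Nat.centralBinom_pos (n + 1)).ne'
      have p4 : (Nat.centralBinom (2 * n + 1) : ℚ) ≠ 0 := by
        exact_mod_cast (Nat.centralBinom_pos (2 * n + 1)).ne'
      have p5 : (Nat.centralBinom (2 * n + 2) : ℚ) ≠ 0 := by
        exact_mod_cast (Nat.centralBinom_pos (2 * n + 2)).ne'
      have pn : ((n : ℚ) + 1) ≠ 0 := by positivity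
      have q1 : (2 * (n : ℚ) + 1) ≠ 0 := by positivity
      have q2 : (2 * (n : ℚ) + 2) ≠ 0 := by positivity
      have s1 : (Nat.centralBinom (n + 1) : ℚ) = 2 * (2 * n + 1) * Nat.centralBinom n / ((n : ℚ) + 1) := by
        field_simp; linarith [h1]
      have s2 : (Nat.centralBinom (2 * n + 1) : ℚ) = 2 * (4 * n + 1) * Nat.centralBinom (2 * n) / (2 * (n : ℚ) + 1) := by
        field_simp; push_cast at h2 ⊢; linarith [h2]
      have s3 : (Nat.centralBinom (2 * n + 2) : ℚ) = 4 * (4 * n + 1) * (4 * n + 3) * Nat.centralBinom (2 * n) / ((2 * (n : ℚ) + 1) * (2 * (n : ℚ) + 2)) := by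
        rw [s2] at h3
        field_simp at h3 ⊢
        linarith [h3]
      rw [s1, s3]
      push_cast
      field_simp
      ring
end

section
/- For every nonzero integer m and every natural number n, the sum over k from 0 to n of ((1728-m)k^3 + 2592k^2 + 1104k + 120) * C(2k,k) * C(3k,k) * C(6k,3k) / m^k equals 24(2n+1)(6n+1)(6n+5) * C(2n,n) * C(3n,n) * C(6n,3n) / m^n. -/
theorem stmt16 (m : ℤ) (hm : m ≠ 0) (n : ℕ) :
    ∑ k ∈ Finset.range (n + 1),
      ((1728 - (m : ℚ)) * k ^ 3 + 2592 * k ^ 2 + 1104 * k + 120) * (Nat.choose (2 * k) k : ℚ) * (Nat.choose (3 * k) k : ℚ) * (Nat.choose (6 * k) (3 * k) : ℚ) / (m : ℚ) ^ k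
    = 24 * (2 * n + 1) * (6 * n + 1) * (6 * n + 5) * (Nat.choose (2 * n) n : ℚ) * (Nat.choose (3 * n) n : ℚ) * (Nat.choose (6 * n) (3 * n) : ℚ) / (m : ℚ) ^ n := by
  have hm' : (m : ℚ) ≠ 0 := Int.cast_ne_zero.mpr hm
  induction n with
  | zero => simp; norm_num
  | succ n ih =>
    rw [Finset.sum_range_succ, ih]
    have c1 : ((2*(n+1)).choose (n+1) : ℚ) = ((2*(n+1)).factorial) / ((n+1).factorial * (n+1).factorial) := by
      rw [Nat.cast_choose ℚ (by omega : n+1 ≤ 2*(n+1)), show 2*(n+1)-(n+1) = n+1 from by omega]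
    have c2 : ((3*(n+1)).choose (n+1) : ℚ) = ((3*(n+1)).factorial) / ((n+1).factorial * (2*(n+1)).factorial) := by
      rw [Nat.cast_choose ℚ (by omega : n+1 ≤ 3*(n+1)), show 3*(n+1)-(n+1) = 2*(n+1) from by omega]
    have c3 : ((6*(n+1)).choose (3*(n+1)) : ℚ) = ((6*(n+1)).factorial) / ((3*(n+1)).factorial * (3*(n+1)).factorial) := by
      rw [Nat.cast_choose ℚ (by omega : 3*(n+1) ≤ 6*(n+1)), show 6*(n+1)-3*(n+1) = 3*(n+1) from by omega]
    have c4 : ((2*n).choose n : ℚ) = ((2*n).factorial) / (n.factorial * n.factorial) := by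
      rw [Nat.cast_choose ℚ (by omega : n ≤ 2*n), show 2*n-n = n from by omega]
    have c5 : ((3*n).choose n : ℚ) = ((3*n).factorial) / (n.factorial * (2*n).factorial) := by
      rw [Nat.cast_choose ℚ (by omega : n ≤ 3*n), show 3*n-n = 2*n from by omega]
    have c6 : ((6*n).choose (3*n) : ℚ) = ((6*n).factorial) / ((3*n).factorial * (3*n).factorial) := by
      rw [Nat.cast_choose ℚ (by omega : 3*n ≤ 6*n), show 6*n-3*n = 3*n from by omega]
    have f1 : ((n+1).factorial : ℚ) = (n+1) * n.factorial := by
      rw [Nat.factorial_succ]; push_cast; ring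
    have f2 : ((2*(n+1)).factorial : ℚ) = (2*n+2)*(2*n+1) * (2*n).factorial := by
      have h : 2*(n+1) = (2*n+1)+1 := by omega
      rw [h, Nat.factorial_succ, Nat.factorial_succ]; push_cast; ring
    have f3 : ((3*(n+1)).factorial : ℚ) = (3*n+3)*(3*n+2)*(3*n+1) * (3*n).factorial := by
      have h : 3*(n+1) = (3*n+2)+1 := by omega
      rw [h, Nat.factorial_succ]
      have h2 : 3*n+2 = (3*n+1)+1 := by omega
      rw [h2, Nat.factorial_succ, Nat.factorial_succ]; push_cast; ring
    have f6 : ((6*(n+1)).factorial : ℚ) = (6*n+6)*(6*n+5)*(6*n+4)*(6*n+3)*(6*n+2)*(6*n+1) * (6*n).factorial := by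
      have h : 6*(n+1) = 6*n+5+1 := by omega
      rw [h, Nat.factorial_succ]
      have : 6*n+5 = 6*n+4+1 := by omega
      rw [this, Nat.factorial_succ]
      have : 6*n+4 = 6*n+3+1 := by omega
      rw [this, Nat.factorial_succ]
      have : 6*n+3 = 6*n+2+1 := by omega
      rw [this, Nat.factorial_succ]
      have : 6*n+2 = 6*n+1+1 := by omega
      rw [this, Nat.factorial_succ, Nat.factorial_succ]
      push_cast; ring
    rw [c1, c2, c3, c4, c5, c6, f1, f2, f3, f6]
    have hn : ((n:ℚ)+1) ≠ 0 := by positivity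
    have hf0 : ((n.factorial : ℚ)) ≠ 0 := by positivity
    have hf2 : (((2*n).factorial : ℚ)) ≠ 0 := by positivity
    have hf3 : (((3*n).factorial : ℚ)) ≠ 0 := by positivity
    have hf6 : (((6*n).factorial : ℚ)) ≠ 0 := by positivity
    have hpow : (m:ℚ)^n ≠ 0 := pow_ne_zero _ hm'
    rw [pow_succ]
    push_cast
    field_simp
    ring
end

section
/- For every positive integer n, the sum over k from 1 to n of (4k^2 - 28k + 3) * 48^k / (k * C(2k,k) * C(4k,2k)) equals 12 - 12(n+1) * 48^n / (C(2n,n) * C(4n,2n)). -/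
lemma cbq_succ (m : ℕ) :
    ((m : ℚ) + 1) * (Nat.centralBinom (m + 1) : ℚ) = 2 * (2 * m + 1) * Nat.centralBinom m := by
  have h := Nat.succ_mul_centralBinom_succ m
  exact_mod_cast congrArg (Nat.cast : ℕ → ℚ) h

lemma cb_pos_q (m : ℕ) : (0 : ℚ) < Nat.centralBinom m := by
  exact_mod_cast Nat.centralBinom_pos m

theorem stmt19 (n : ℕ) (hn : 0 < n) :
    ∑ k ∈ Finset.Icc 1 n,
      (4 * (k : ℚ) ^ 2 - 28 * k + 3) * 48 ^ k / ((k : ℚ) * (Nat.choose (2 * k) k : ℚ) * (Nat.choose (4 * k) (2 * k) : ℚ))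
    = 12 - 12 * (n + 1 : ℚ) * 48 ^ n / ((Nat.choose (2 * n) n : ℚ) * (Nat.choose (4 * n) (2 * n) : ℚ)) := by
  induction n with
  | zero => exact absurd hn (lt_irrefl 0)
  | succ m ih =>
    rcases Nat.eq_zero_or_pos m with hm | hm
    · subst hm
      norm_num [Finset.Icc_self, Nat.choose]
    · rw [Finset.sum_Icc_succ_top (by omega : 1 ≤ m + 1), ih hm]
      have hA : (Nat.choose (2 * m) m : ℚ) = Nat.centralBinom m := by
        rw [Nat.centralBinom]
      have hA' : (Nat.choose (2 * (m + 1)) (m + 1) : ℚ) = Nat.centralBinom (m + 1) := by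
        rw [Nat.centralBinom]
      have hB : (Nat.choose (4 * m) (2 * m) : ℚ) = Nat.centralBinom (2 * m) := by
        rw [Nat.centralBinom]; ring_nf
      have hB' : (Nat.choose (4 * (m + 1)) (2 * (m + 1)) : ℚ) = Nat.centralBinom (2 * (m + 1)) := by
        rw [Nat.centralBinom]; ring_nf
      rw [hA, hA', hB, hB']
      have p0 := cb_pos_q m
      have p1 := cb_pos_q (m + 1)
      have p2 := cb_pos_q (2 * m)
      have p3 := cb_pos_q (2 * m + 1)
      have p4 := cb_pos_q (2 * (m + 1))
      have e1 := cbq_succ m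
      have e2 := cbq_succ (2 * m)
      have e3 := cbq_succ (2 * m + 1)
      have hm1 : (0 : ℚ) < (m : ℚ) + 1 := by positivity
      have key1 : (Nat.centralBinom (m + 1) : ℚ) = 2 * (2 * m + 1) * Nat.centralBinom m / (m + 1) := by
        field_simp
        linarith [e1]
      have h2m2 : (2 * (m + 1) : ℕ) = (2 * m + 1) + 1 := by ring
      have key2 : (Nat.centralBinom (2 * (m + 1)) : ℚ)
          = 4 * (4 * m + 1) * (4 * m + 3) * Nat.centralBinom (2 * m) / ((2 * m + 1) * (2 * m + 2)) := by
        rw [h2m2]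
        have e3' : ((2 * m + 1 : ℕ) : ℚ) + 1 ≠ 0 := by push_cast; positivity
        have : ((2 * m + 1 : ℕ) : ℚ) + 1 = 2 * m + 2 := by push_cast; ring
        field_simp
        push_cast at e3 e2 ⊢
        nlinarith [e3, e2, p3]
      rw [key1, key2]
      have h1 : ((m : ℚ) + 1) ≠ 0 := by positivity
      have h2 : (2 * (m : ℚ) + 1) ≠ 0 := by positivity
      have h3 : (2 * (m : ℚ) + 2) ≠ 0 := by positivity
      push_cast
      field_simp
      ring
end
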